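/- arXiv:1804.05507 — 9 statements merged into one kernel-verified Lean document; each statement's English description precedes it below -/
import Mathlib

section
/- Let G(X, X̄, Y) be monotone in all X and X̄ variables and satisfy F(X,Y) = G(X, ¬X, Y). Then for every i with 1 ≤ i ≤ n: G(0^i, X_{i+1..n}, 0^i, ¬X_{i+1..n}, Y) implies ∃X_{1..i} F(X,Y), and ∃X_{1..i} F(X,Y) implies G(1^i, X_{i+1..n}, 1^i, ¬X_{i+1..n}, Y). -/
/-- Propositional bounds on existential projection via the monotone version G:
G(0^i, X, 0^i, ¬X, Y) ⟹ ∃X_{1..i} F(X,Y) ⟹ G(1^i, X, 1^i, ¬X, Y). -/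
theorem exists_bounds (n m : ℕ)
    (F : (Fin n → Bool) → (Fin m → Bool) → Bool)
    (G : (Fin n → Bool) → (Fin n → Bool) → (Fin m → Bool) → Bool)
    (hmono : ∀ (X X' Xb Xb' : Fin n → Bool) (Y : Fin m → Bool),
      (∀ j, X j ≤ X' j) → (∀ j, Xb j ≤ Xb' j) →
      G X Xb Y = true → G X' Xb' Y = true)
    (hF : ∀ X Y, F X Y = G X (fun j => !(X j)) Y) :
    ∀ (i : ℕ), i ≤ n → ∀ (X : Fin n → Bool) (Y : Fin m → Bool),
      (G (fun j => if (j : ℕ) < i then false else X j)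
          (fun j => if (j : ℕ) < i then false else !(X j)) Y = true →
        ∃ A : Fin n → Bool,
          F (fun j => if (j : ℕ) < i then A j else X j) Y = true) ∧
      ((∃ A : Fin n → Bool,
          F (fun j => if (j : ℕ) < i then A j else X j) Y = true) →
        G (fun j => if (j : ℕ) < i then true else X j)
          (fun j => if (j : ℕ) < i then true else !(X j)) Y = true) := by
  intro i hi X Y
  constructor
  · intro h
    refine ⟨fun _ => false, ?_⟩
    rw [hF]
    refine hmono _ _ _ _ _ ?_ ?_ h
    · intro j; by_cases hj : (j : ℕ) < i <;> simp [hj]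
    · intro j; by_cases hj : (j : ℕ) < i <;> simp [hj]
  · rintro ⟨A, hA⟩
    rw [hF] at hA
    refine hmono _ _ _ _ _ ?_ ?_ hA
    · intro j; by_cases hj : (j : ℕ) < i <;> simp [hj]
    · intro j; by_cases hj : (j : ℕ) < i <;> simp [hj]
end

section
/- Let G be monotone in X and X̄ with F(X,Y) = G(X,¬X,Y). Define Δ_i = ¬∃X_{1..i-1} F(X_{1..i-1}, 0, X_{i+1..n}, Y) and δ_i = ¬G(1^{i-1}0, X_{i+1..n}, 1^i, ¬X_{i+1..n}, Y). Then δ_i implies Δ_i, and Δ_i implies ¬G(0^i, X_{i+1..n}, 0^{i-1}1, ¬X_{i+1..n}, Y), for all values of X_{i+1..n}, Y. -/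
/-- Bounds on Δ_i: δ_i ⟹ Δ_i ⟹ ¬G(0^i, X, 0^{i-1}1, ¬X, Y), where
Δ_i = ¬∃X_{1..i-1} F[x_i:=0] and δ_i = ¬G(1^{i-1}0, X, 1^i, ¬X, Y). -/
theorem delta_bounds (n m : ℕ)
    (F : (Fin n → Bool) → (Fin m → Bool) → Bool)
    (G : (Fin n → Bool) → (Fin n → Bool) → (Fin m → Bool) → Bool)
    (hmono : ∀ (X X' Xb Xb' : Fin n → Bool) (Y : Fin m → Bool),
      (∀ j, X j ≤ X' j) → (∀ j, Xb j ≤ Xb' j) →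
      G X Xb Y = true → G X' Xb' Y = true)
    (hF : ∀ X Y, F X Y = G X (fun j => !(X j)) Y)
    (i : Fin n) :
    ∀ (X : Fin n → Bool) (Y : Fin m → Bool),
      (¬ (G (fun j => if j < i then true else if j = i then false else X j)
            (fun j => if j ≤ i then true else !(X j)) Y = true) →
        ¬ ∃ A : Fin n → Bool,
            F (fun j => if j < i then A j else if j = i then false else X j) Y = true) ∧
      ((¬ ∃ A : Fin n → Bool,
            F (fun j => if j < i then A j else if j = i then false else X j) Y = true) →
        ¬ (G (fun j => if j ≤ i then false else X j)
             (fun j => if j < i then false else if j = i then true else !(X j)) Y = true)) := by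
  intro X Y
  constructor
  · rintro hG ⟨A, hA⟩
    apply hG
    rw [hF] at hA
    refine hmono _ _ _ _ _ ?_ ?_ hA
    · intro j
      rcases lt_trichotomy j i with h | h | h
      · simp [h]
      · simp [h]
      · simp [not_lt_of_gt h, h.ne', le_refl]
    · intro j
      rcases lt_trichotomy j i with h | h | h
      · simp [h, le_of_lt h]
      · simp [h, le_refl]
      · simp [not_lt_of_gt h, h.ne', not_le_of_gt h, le_refl]
  · rintro hE hG
    apply hE
    refine ⟨fun _ => false, ?_⟩
    rw [hF]
    refine hmono _ _ _ _ _ ?_ ?_ hG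
    · intro j
      rcases lt_trichotomy j i with h | h | h
      · simp [h, le_of_lt h]
      · simp [h, le_refl]
      · simp [not_lt_of_gt h, h.ne', not_le_of_gt h, le_refl]
    · intro j
      rcases lt_trichotomy j i with h | h | h
      · simp [h]
      · simp [h, le_refl]
      · simp [not_lt_of_gt h, h.ne', le_refl]
end

section
/- Let G be monotone in X and X̄ with F(X,Y) = G(X,¬X,Y). Define Γ_i = ¬∃X_{1..i-1} F(X_{1..i-1}, 1, X_{i+1..n}, Y) and γ_i = ¬G(1^i, X_{i+1..n}, 1^{i-1}0, ¬X_{i+1..n}, Y). Then γ_i implies Γ_i, and Γ_i implies ¬G(0^{i-1}1, X_{i+1..n}, 0^i, ¬X_{i+1..n}, Y), for all values of X_{i+1..n}, Y. -/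
/-- Bounds on Γ_i: γ_i ⟹ Γ_i ⟹ ¬G(0^{i-1}1, X, 0^i, ¬X, Y), where
Γ_i = ¬∃X_{1..i-1} F[x_i:=1] and γ_i = ¬G(1^i, X, 1^{i-1}0, ¬X, Y). -/
theorem gamma_bounds (n m : ℕ)
    (F : (Fin n → Bool) → (Fin m → Bool) → Bool)
    (G : (Fin n → Bool) → (Fin n → Bool) → (Fin m → Bool) → Bool)
    (hmono : ∀ (X X' Xb Xb' : Fin n → Bool) (Y : Fin m → Bool),
      (∀ j, X j ≤ X' j) → (∀ j, Xb j ≤ Xb' j) →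
      G X Xb Y = true → G X' Xb' Y = true)
    (hF : ∀ X Y, F X Y = G X (fun j => !(X j)) Y)
    (i : Fin n) :
    ∀ (X : Fin n → Bool) (Y : Fin m → Bool),
      (¬ (G (fun j => if j ≤ i then true else X j)
            (fun j => if j < i then true else if j = i then false else !(X j)) Y = true) →
        ¬ ∃ A : Fin n → Bool,
            F (fun j => if j < i then A j else if j = i then true else X j) Y = true) ∧
      ((¬ ∃ A : Fin n → Bool,
            F (fun j => if j < i then A j else if j = i then true else X j) Y = true) →
        ¬ (G (fun j => if j < i then false else if j = i then true else X j)
             (fun j => if j ≤ i then false else !(X j)) Y = true)) := by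
  intro X Y
  constructor
  · rintro hG ⟨A, hA⟩
    rw [hF] at hA
    apply hG
    apply hmono _ _ _ _ _ _ _ hA
    · intro j
      by_cases h1 : j < i
      · simp [h1, le_of_lt h1]
      · by_cases h2 : j = i
        · simp [h2]
        · have h3 : ¬ j ≤ i := fun h => h2 (le_antisymm h (not_lt.mp h1))
          simp [h1, h2, h3]
    · intro j
      by_cases h1 : j < i
      · simp [h1, Bool.le_true]
      · by_cases h2 : j = i <;> simp [h1, h2]
  · intro hne hG
    apply hne
    refine ⟨fun _ => false, ?_⟩
    rw [hF]
    apply hmono _ _ _ _ _ _ _ hG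
    · intro j
      by_cases h1 : j < i
      · simp [h1]
      · by_cases h2 : j = i <;> simp [h1, h2]
    · intro j
      by_cases h1 : j < i
      · simp [h1, le_of_lt h1, Bool.le_true]
      · by_cases h2 : j = i
        · simp [h1, h2]
        · simp [h1, h2, not_le.mpr (lt_of_le_of_ne (not_lt.mp h1) (Ne.symm (by simpa using h2)))]
end

section
/- Given a relational specification F(X,Y), the function Δ_i(X_{i+1..n},Y) := ¬∃X_{1..i-1} F(X_{1..i-1}, 0, X_{i+1..n}, Y) is a correct Skolem function for x_i with respect to F^{(i-1)} := ∃X_{1..i-1} F; that is, F^{(i-1)}(Δ_i, X_{i+1..n}, Y) holds iff ∃x_i F^{(i-1)}(x_i, X_{i+1..n}, Y) holds, for all X_{i+1..n}, Y. -/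
/-- Δ_i = ¬∃X_{1..i-1} F[x_i:=0] is a correct Skolem function for x_i
with respect to F^{(i-1)} = ∃X_{1..i-1} F. -/
theorem delta_is_skolem (n m : ℕ)
    (F : (Fin n → Bool) → (Fin m → Bool) → Bool) (i : Fin n) :
    ∀ (X : Fin n → Bool) (Y : Fin m → Bool),
      (∃ A : Fin n → Bool,
          F (fun j => if j < i then A j
              else if j = i then
                !(decide (∃ A' : Fin n → Bool,
                    F (fun k => if k < i then A' k else if k = i then false else X k) Y = true))
              else X j) Y = true)
        ↔ (∃ b : Bool, ∃ A : Fin n → Bool,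
            F (fun j => if j < i then A j else if j = i then b else X j) Y = true) := by
  intro X Y
  constructor
  · rintro ⟨A, hA⟩
    exact ⟨_, A, hA⟩
  · rintro ⟨b, A, hA⟩
    by_cases h : ∃ A' : Fin n → Bool,
        F (fun k => if k < i then A' k else if k = i then false else X k) Y = true
    · obtain ⟨A', hA'⟩ := id h
      refine ⟨A', ?_⟩
      have hd : decide (∃ A' : Fin n → Bool,
          F (fun k => if k < i then A' k else if k = i then false else X k) Y = true) = true :=
        decide_eq_true h
      have heq : (fun j => if j < i then A' j
          else if j = i then
            !(decide (∃ A' : Fin n → Bool,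
                F (fun k => if k < i then A' k else if k = i then false else X k) Y = true))
          else X j)
          = (fun k => if k < i then A' k else if k = i then false else X k) := by
        funext j
        simp only [hd, Bool.not_true]
      rw [heq]; exact hA'
    · refine ⟨A, ?_⟩
      have hb : b = true := by
        cases b with
        | true => rfl
        | false => exact absurd ⟨A, hA⟩ h
      subst hb
      have hd : decide (∃ A' : Fin n → Bool,
          F (fun k => if k < i then A' k else if k = i then false else X k) Y = true) = false :=
        decide_eq_false h
      have heq : (fun j => if j < i then A j
          else if j = i then
            !(decide (∃ A' : Fin n → Bool,
                F (fun k => if k < i then A' k else if k = i then false else X k) Y = true))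
          else X j)
          = (fun j => if j < i then A j else if j = i then true else X j) := by
        funext j
        simp only [hd, Bool.not_false]
      rw [heq]; exact hA
end

section
/- Given a relational specification F(X,Y), the function ¬Γ_i, where Γ_i(X_{i+1..n},Y) := ¬∃X_{1..i-1} F(X_{1..i-1}, 1, X_{i+1..n}, Y), is a correct Skolem function for x_i with respect to F^{(i-1)} := ∃X_{1..i-1} F. -/
/-- ¬Γ_i, where Γ_i = ¬∃X_{1..i-1} F[x_i:=1], is a correct Skolem function for
x_i with respect to F^{(i-1)} = ∃X_{1..i-1} F. -/
theorem neg_gamma_is_skolem (n m : ℕ)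
    (F : (Fin n → Bool) → (Fin m → Bool) → Bool) (i : Fin n) :
    ∀ (X : Fin n → Bool) (Y : Fin m → Bool),
      (∃ A : Fin n → Bool,
          F (fun j => if j < i then A j
              else if j = i then
                decide (∃ A' : Fin n → Bool,
                    F (fun k => if k < i then A' k else if k = i then true else X k) Y = true)
              else X j) Y = true)
        ↔ (∃ b : Bool, ∃ A : Fin n → Bool,
            F (fun j => if j < i then A j else if j = i then b else X j) Y = true) := by
  intro X Y
  constructor
  · rintro ⟨A, hA⟩
    exact ⟨_, A, hA⟩
  · rintro ⟨b, A, hA⟩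
    by_cases h : ∃ A' : Fin n → Bool,
        F (fun k => if k < i then A' k else if k = i then true else X k) Y = true
    · have hd := decide_eq_true h
      obtain ⟨A', hA'⟩ := h
      refine ⟨A', ?_⟩
      simp only [hd]
      exact hA'
    · have hd := decide_eq_false h
      refine ⟨A, ?_⟩
      have hb : b = false := by
        cases b with
        | false => rfl
        | true => exact absurd ⟨A, hA⟩ h
      rw [hb] at hA
      simp only [hd]
      exact hA
end

section
/- Let G be monotone in X and X̄ with F(X,Y) = G(X,¬X,Y), and fix i with 1 ≤ i ≤ n. Suppose for all j with 1 ≤ j ≤ i: G(1^j, X_{j+1..n}, 1^j, X̄_{j+1..n}, Y) implies G(1^{j-1}0, X_{j+1..n}, 1^{j-1}1, X̄_{j+1..n}, Y) ∨ G(1^{j-1}1, X_{j+1..n}, 1^{j-1}0, X̄_{j+1..n}, Y), for all X_{j+1..n}, X̄_{j+1..n}, Y. Then ∃X_{1..i} F(X,Y) ↔ G(1^i, X_{i+1..n}, 1^i, ¬X_{i+1..n}, Y) for all X_{i+1..n}, Y. -/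
/-- Theorem 3(a): if for every j ≤ i the implication
G(1^j,·,1^j,·,·) ⟹ G(1^{j-1}0,·,1^{j-1}1,·,·) ∨ G(1^{j-1}1,·,1^{j-1}0,·,·) holds,
then ∃X_{1..i} F(X,Y) ↔ G(1^i, X_{i+1..n}, 1^i, ¬X_{i+1..n}, Y). -/
theorem phase1_exact (n m : ℕ)
    (F : (Fin n → Bool) → (Fin m → Bool) → Bool)
    (G : (Fin n → Bool) → (Fin n → Bool) → (Fin m → Bool) → Bool)
    (hmono : ∀ (X X' Xb Xb' : Fin n → Bool) (Y : Fin m → Bool),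
      (∀ j, X j ≤ X' j) → (∀ j, Xb j ≤ Xb' j) →
      G X Xb Y = true → G X' Xb' Y = true)
    (hF : ∀ X Y, F X Y = G X (fun j => !(X j)) Y)
    (i : ℕ) (hi : i ≤ n)
    (hcond : ∀ p : ℕ, p < i →
      ∀ (X Xb : Fin n → Bool) (Y : Fin m → Bool),
        G (fun k => if (k : ℕ) ≤ p then true else X k)
          (fun k => if (k : ℕ) ≤ p then true else Xb k) Y = true →
        (G (fun k => if (k : ℕ) < p then true else if (k : ℕ) = p then false else X k)
            (fun k => if (k : ℕ) ≤ p then true else Xb k) Y = true ∨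
         G (fun k => if (k : ℕ) ≤ p then true else X k)
            (fun k => if (k : ℕ) < p then true else if (k : ℕ) = p then false else Xb k) Y = true)) :
    ∀ (X : Fin n → Bool) (Y : Fin m → Bool),
      (∃ A : Fin n → Bool,
          F (fun k => if (k : ℕ) < i then A k else X k) Y = true)
        ↔ G (fun k => if (k : ℕ) < i then true else X k)
            (fun k => if (k : ℕ) < i then true else !(X k)) Y = true := by
  have key : ∀ j : ℕ, j ≤ i → ∀ (X : Fin n → Bool) (Y : Fin m → Bool),
      G (fun k => if (k : ℕ) < j then true else X k)
        (fun k => if (k : ℕ) < j then true else !(X k)) Y = true →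
      ∃ A : Fin n → Bool,
        F (fun k => if (k : ℕ) < j then A k else X k) Y = true := by
    intro j
    induction j with
    | zero =>
      intro _ X Y hG
      refine ⟨X, ?_⟩
      rw [hF]
      convert hG using 2 <;> funext k <;> simp
    | succ j IH =>
      intro hj X Y hG
      have hGj : G (fun k => if (k : ℕ) ≤ j then true else X k)
          (fun k => if (k : ℕ) ≤ j then true else !(X k)) Y = true := by
        convert hG using 2 <;> funext k <;>
          rcases lt_trichotomy (k : ℕ) j with h | h | h <;>
          simp [h, Nat.lt_succ_iff, le_of_lt, le_of_eq]
      rcases hcond j (by omega) X (fun k => !(X k)) Y hGj with h1 | h2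
      · set X' : Fin n → Bool := fun k => if (k : ℕ) = j then false else X k with hX'
        have hG' : G (fun k => if (k : ℕ) < j then true else X' k)
            (fun k => if (k : ℕ) < j then true else !(X' k)) Y = true := by
          convert h1 using 2 <;> funext k <;> simp only [hX'] <;>
            split_ifs <;> first | rfl | omega | simp
        obtain ⟨A, hA⟩ := IH (by omega) X' Y hG'
        refine ⟨fun k => if (k : ℕ) < j then A k else false, ?_⟩
        have heq : (fun k : Fin n => if (k : ℕ) < j + 1 then
            (if (k : ℕ) < j then A k else false) else X k)
            = fun k : Fin n => if (k : ℕ) < j then A k else X' k := by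
          funext k
          simp only [hX']
          split_ifs <;> first | rfl | omega | simp
        rw [heq]; exact hA
      · set X' : Fin n → Bool := fun k => if (k : ℕ) = j then true else X k with hX'
        have hG' : G (fun k => if (k : ℕ) < j then true else X' k)
            (fun k => if (k : ℕ) < j then true else !(X' k)) Y = true := by
          convert h2 using 2 <;> funext k <;> simp only [hX'] <;>
            split_ifs <;> first | rfl | omega | simp
        obtain ⟨A, hA⟩ := IH (by omega) X' Y hG'
        refine ⟨fun k => if (k : ℕ) < j then A k else true, ?_⟩
        have heq : (fun k : Fin n => if (k : ℕ) < j + 1 then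
            (if (k : ℕ) < j then A k else true) else X k)
            = fun k : Fin n => if (k : ℕ) < j then A k else X' k := by
          funext k
          simp only [hX']
          split_ifs <;> first | rfl | omega | simp
        rw [heq]; exact hA
  intro X Y
  constructor
  · rintro ⟨A, hA⟩
    rw [hF] at hA
    refine hmono _ _ _ _ _ ?_ ?_ hA <;>
      intro k <;> by_cases h : (k : ℕ) < i <;> simp [h]
  · exact key i le_rfl X Y
end

section
/- The error formula is unsatisfiable iff the candidate functions form a correct Skolem function vector: for F : Bool^n → Bool^m → Bool and candidates Ψ = (ψ_1,...,ψ_n) with ψ_i : Bool^m → Bool, the formula ε_Ψ(X', X, Y) := F(X',Y) ∧ (⋀_i x_i = ψ_i(Y)) ∧ ¬F(X,Y) has no satisfying assignment if and only if for all Y, (∃X, F(X,Y)) → F(Ψ(Y), Y). -/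
/-- The error formula ε_Ψ = F(X',Y) ∧ (⋀ᵢ xᵢ = ψᵢ(Y)) ∧ ¬F(X,Y) is
unsatisfiable iff Ψ is a correct Skolem function vector. -/
theorem error_formula_unsat_iff_correct (n m : ℕ)
    (F : (Fin n → Bool) → (Fin m → Bool) → Bool)
    (ψ : Fin n → (Fin m → Bool) → Bool) :
    (¬ ∃ (X' X : Fin n → Bool) (Y : Fin m → Bool),
        F X' Y = true ∧ (∀ i, X i = ψ i Y) ∧ F X Y = false)
      ↔ (∀ Y : Fin m → Bool,
          (∃ X : Fin n → Bool, F X Y = true) → F (fun i => ψ i Y) Y = true) := by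
  constructor
  · intro h Y ⟨X, hX⟩
    by_contra hc
    exact h ⟨X, fun i => ψ i Y, Y, hX, fun i => rfl,
      Bool.not_eq_true _ ▸ hc⟩
  · rintro h ⟨X', X, Y, h1, h2, h3⟩
    have := h Y ⟨X', h1⟩
    have hXe : X = fun i => ψ i Y := funext h2
    rw [hXe, this] at h3
    simp at h3
end

section
/- For the equality specification F(X,Y) = ⋀_{i=1}^n (x_i ↔ y_i), the candidate δ_i(X_{i+1..n}, Y) := y_i ∨ ⋁_{j=i+1}^n (x_j ↔ ¬y_j) equals the exact function Δ_i := ¬∃X_{1..i-1} F(X_{1..i-1}, 0, X_{i+1..n}, Y), for every i and all values of X_{i+1..n}, Y. -/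
/-- For the equality specification F(X,Y) = ⋀ᵢ (xᵢ ↔ yᵢ), the candidate
δ_i = yᵢ ∨ ⋁_{j>i} (x_j ↔ ¬y_j) equals the exact Δ_i = ¬∃X_{1..i-1} F[x_i:=0]. -/
theorem equality_spec_delta_exact (n : ℕ) (i : Fin n) :
    ∀ (X Y : Fin n → Bool),
      (Y i || decide (∃ j : Fin n, i < j ∧ X j = !(Y j)))
        = !(decide (∃ A : Fin n → Bool,
            (∀ k : Fin n,
              (if k < i then A k else if k = i then false else X k) = Y k))) := by
  intro X Y
  rw [Bool.eq_iff_iff]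
  simp only [Bool.or_eq_true, decide_eq_true_eq, Bool.not_eq_true', decide_eq_false_iff_not]
  constructor
  · rintro (h | ⟨j, hij, hj⟩) ⟨A, hA⟩
    · have := hA i
      simp [lt_irrefl] at this
      rw [this] at h; simp at h
    · have := hA j
      have h1 : ¬ j < i := not_lt.mpr hij.le
      have h2 : j ≠ i := hij.ne'
      simp [h1, h2] at this
      rw [this] at hj; simp at hj
  · intro h
    by_contra hc
    push_neg at hc
    obtain ⟨h1, h2⟩ := hc
    apply h
    refine ⟨Y, fun k => ?_⟩
    split
    · rfl
    · split
      · next heq =>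
        subst heq
        simp only [Bool.not_eq_true] at h1
        exact h1.symm
      · next hlt heq =>
        have hik : i < k := lt_of_le_of_ne (not_lt.mp hlt) (Ne.symm heq)
        have := h2 k hik
        cases hx : X k <;> cases hy : Y k <;> simp_all
end

section
/- If an NNF formula F is positive unate in every output variable x_i (for all i), then the constant vector Ψ = (1,1,...,1) is a correct Skolem function vector for F. -/
/-- If F is positive unate in every output variable, then the all-ones vector
is a correct Skolem function vector. -/
theorem all_unate_all_ones_skolem (n m : ℕ)
    (F : (Fin n → Bool) → (Fin m → Bool) → Bool)
    (hunate : ∀ (i : Fin n) (X : Fin n → Bool) (Y : Fin m → Bool),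
      F (Function.update X i false) Y = true → F (Function.update X i true) Y = true) :
    ∀ Y : Fin m → Bool,
      (∃ X : Fin n → Bool, F X Y = true) → F (fun _ => true) Y = true := by
  intro Y ⟨X, hX⟩
  have key : ∀ s : Finset (Fin n),
      F (fun i => if i ∈ s then true else X i) Y = true := by
    intro s
    induction s using Finset.induction_on with
    | empty => simpa using hX
    | @insert j s hj ih =>
      set Z : Fin n → Bool := fun i => if i ∈ s then true else X i with hZ
      have hupd : (fun i => if i ∈ insert j s then true else X i)
          = Function.update Z j true := by
        funext i
        by_cases hij : i = j
        · subst hij; simp [Function.update, Z]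
        · simp [Function.update, hij, Z, Finset.mem_insert]
      rw [hupd]
      cases hZj : Z j with
      | true =>
        have : Function.update Z j true = Z := by
          funext i
          by_cases hij : i = j
          · subst hij; simp [Function.update, hZj]
          · simp [Function.update, hij]
        rw [this]; exact ih
      | false =>
        apply hunate j Z Y
        have : Function.update Z j false = Z := by
          funext i
          by_cases hij : i = j
          · subst hij; simp [Function.update, hZj]
          · simp [Function.update, hij]
        rw [this]; exact ih
  have := key Finset.univ
  simpa using this
end
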